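/- Let τ ≥ 0 and let ξ be a real random variable with E ξ = 0 and Var ξ = σ² whose distribution belongs to the class A₁(τ). Then for every real h with |h|τ < 1, one has log E exp(ihξ) = −(σ²h²/2)(1 + θ|h|τ/3) for some complex θ with |θ| ≤ 1; in particular |log E exp(ihξ) + σ²h²/2| ≤ σ²h²|h|τ/6. -/

import Mathlib

open MeasureTheory ProbabilityTheory

noncomputable section

/-- `φ` is the cumulant generating function (analytic logarithm of the Laplace transform,
normalized by `φ 0 = 0`) of `μ` on the disc `{z : ‖z‖ * τ < 1}`, with third derivative
bounded by `τ · Var μ`.  This is the defining property of the class `A₁(τ)`. -/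
def IsCGF (φ : ℂ → ℂ) (τ : ℝ) (μ : Measure ℝ) : Prop :=
  φ 0 = 0 ∧ ∀ z : ℂ, ‖z‖ * τ < 1 →
    Integrable (fun x : ℝ => Complex.exp (z * x)) μ ∧
    Complex.exp (φ z) = ∫ x : ℝ, Complex.exp (z * x) ∂μ ∧
    AnalyticAt ℂ φ z ∧
    ‖iteratedDeriv 3 φ z‖ ≤ τ * variance id μ

/-- The class `A₁(τ)` of distributions on `ℝ`. -/
def MemA1 (τ : ℝ) (μ : Measure ℝ) : Prop := ∃ φ : ℂ → ℂ, IsCGF φ τ μ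

/-- `π` is a coupling of `F` and `G`. -/
def IsCoupling (π : Measure (ℝ × ℝ)) (F G : Measure ℝ) : Prop :=
  π.map Prod.fst = F ∧ π.map Prod.snd = G

/-! On the disc `‖z‖ τ < 1` the function `exp ∘ φ` is the complex moment generating function
`z ↦ E exp(zξ)`, so differentiating it at `0` gives `φ'(0) = E ξ = 0` and
`φ''(0) = E ξ² = σ²`. Integrating the bound `‖φ'''‖ ≤ τσ²` three times along the segment
`[0, ih]` gives `‖φ(ih) + σ²h²/2‖ ≤ τσ²|h|³/6`, and `θ` is this remainder normalized by
`σ²h²|h|τ/6`. -/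

open Filter Topology Set

section TaylorAlongRays

variable {E : Type*} [NormedAddCommGroup E] [NormedSpace ℂ E]

theorem norm_le_of_hasDerivAt_of_norm_le_mul_pow {g g' : ℂ → E} {s : Set ℂ}
    (hs : StarConvex ℝ 0 s) (hg : ∀ w ∈ s, HasDerivAt g (g' w) w) (hg0 : g 0 = 0)
    {C : ℝ} {n : ℕ} (hC : ∀ w ∈ s, ‖g' w‖ ≤ C * ‖w‖ ^ n) {w : ℂ} (hw : w ∈ s) :
    ‖g w‖ ≤ C / (n + 1) * ‖w‖ ^ (n + 1) := by
  have hmem : ∀ t ∈ Icc (0 : ℝ) 1, (t : ℂ) * w ∈ s := fun t ht => by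
    simpa [Complex.real_smul] using hs.smul_mem hw ht.1 ht.2
  have hderiv : ∀ t ∈ Icc (0 : ℝ) 1,
      HasDerivAt (fun t : ℝ => g (t * w)) (w • g' (t * w)) t := fun t ht =>
    have hline : HasDerivAt (fun t : ℝ => (t : ℂ) * w) w t := by
      simpa using (hasDerivAt_id t).ofReal_comp.mul_const w
    (hg _ (hmem t ht)).scomp t hline
  have hB : ∀ t : ℝ, HasDerivAt (fun t => C / (n + 1) * ‖w‖ ^ (n + 1) * t ^ (n + 1))
      (C * ‖w‖ ^ (n + 1) * t ^ n) t := fun t =>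
    ((hasDerivAt_pow (n + 1) t).const_mul _).congr_deriv (by push_cast; field_simp)
  have hbound : ∀ t ∈ Ico (0 : ℝ) 1, ‖w • g' (t * w)‖ ≤ C * ‖w‖ ^ (n + 1) * t ^ n := by
    intro t ht
    calc ‖w • g' (t * w)‖ ≤ ‖w‖ * (C * ‖(t : ℂ) * w‖ ^ n) := by
          rw [norm_smul]
          exact mul_le_mul_of_nonneg_left (hC _ (hmem t (Ico_subset_Icc_self ht))) (norm_nonneg w)
      _ = C * ‖w‖ ^ (n + 1) * t ^ n := by
          rw [norm_mul, Complex.norm_real, Real.norm_of_nonneg ht.1]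
          ring
  simpa using image_norm_le_of_norm_deriv_right_le_deriv_boundary
    (fun t ht => (hderiv t ht).continuousAt.continuousWithinAt)
    (fun t ht => (hderiv t (Ico_subset_Icc_self ht)).hasDerivWithinAt) (by simp [hg0]) hB hbound
    (right_mem_Icc.2 zero_le_one)

theorem norm_sub_taylor_two_le [CompleteSpace E] {f : ℂ → E} {s : Set ℂ}
    (hs : StarConvex ℝ 0 s) (hf : AnalyticOnNhd ℂ f s) {C : ℝ}
    (hC : ∀ w ∈ s, ‖iteratedDeriv 3 f w‖ ≤ C) {w : ℂ} (hw : w ∈ s) :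
    ‖f w - f 0 - w • deriv f 0 - (w ^ 2 / 2) • iteratedDeriv 2 f 0‖ ≤ C / 6 * ‖w‖ ^ 3 := by
  simp only [iteratedDeriv_succ, iteratedDeriv_zero] at hC ⊢
  have hf₁ := hf.deriv
  have hf₂ := hf₁.deriv
  have hrem₂ : ∀ v ∈ s, ‖deriv (deriv f) v - deriv (deriv f) 0‖ ≤ C * ‖v‖ := fun v hv => by
    simpa using norm_le_of_hasDerivAt_of_norm_le_mul_pow (n := 0) hs
      (fun u hu => (hf₂ u hu).differentiableAt.hasDerivAt.sub_const _) (sub_self _)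
      (by simpa using hC) hv
  have hrem₁ : ∀ v ∈ s, ‖deriv f v - deriv f 0 - v • deriv (deriv f) 0‖ ≤ C / 2 * ‖v‖ ^ 2 :=
    fun v hv => (norm_le_of_hasDerivAt_of_norm_le_mul_pow (n := 1) hs
      (fun u hu => ((hf₁ u hu).differentiableAt.hasDerivAt.sub_const (deriv f 0)).sub
        ((hasDerivAt_id u).smul_const (deriv (deriv f) 0))) (by simp) (by simpa using hrem₂)
      hv).trans_eq (by norm_num)
  have hrem₀ := norm_le_of_hasDerivAt_of_norm_le_mul_pow (n := 2) hs
    (g' := fun u => deriv f u - deriv f 0 - u • deriv (deriv f) 0)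
    (fun u hu => ((((hf u hu).differentiableAt.hasDerivAt.sub_const (f 0)).sub
      ((hasDerivAt_id u).smul_const (deriv f 0))).sub
      (((hasDerivAt_pow 2 u).div_const 2).smul_const (deriv (deriv f) 0))).congr_deriv (by simp))
    (by simp) hrem₁ hw
  exact hrem₀.trans_eq (by ring)

end TaylorAlongRays

theorem starConvex_setOf_norm_mul_lt_one {F : Type*} [SeminormedAddCommGroup F] [NormedSpace ℝ F]
    (τ : ℝ) : StarConvex ℝ 0 {x : F | ‖x‖ * τ < 1} := by
  refine starConvex_zero_iff.2 fun x (hx : ‖x‖ * τ < 1) a ha ha₁ => ?_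
  show ‖a • x‖ * τ < 1
  rw [norm_smul, Real.norm_of_nonneg ha, mul_assoc]
  rcases le_total 0 (‖x‖ * τ) with h | h <;> nlinarith

section CumulantDerivatives

variable {φ M : ℂ → ℂ} {z : ℂ}

theorem deriv_eq_of_cexp_eventuallyEq (hφ : DifferentiableAt ℂ φ z)
    (hM : (fun w => Complex.exp (φ w)) =ᶠ[𝓝 z] M) :
    deriv M z = Complex.exp (φ z) * deriv φ z :=
  hM.deriv_eq.symm.trans hφ.hasDerivAt.cexp.deriv

theorem deriv_deriv_eq_of_cexp_eventuallyEq (hφ : AnalyticAt ℂ φ z)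
    (hM : (fun w => Complex.exp (φ w)) =ᶠ[𝓝 z] M) :
    deriv (deriv M) z = Complex.exp (φ z) * (deriv φ z ^ 2 + deriv (deriv φ) z) := by
  have hM' : deriv M =ᶠ[𝓝 z] fun w => Complex.exp (φ w) * deriv φ w := by
    filter_upwards [hφ.eventually_analyticAt, hM.eventually_nhds] with w hw hMw
    exact deriv_eq_of_cexp_eventuallyEq hw.differentiableAt hMw
  rw [hM'.deriv_eq]
  exact (hφ.differentiableAt.hasDerivAt.cexp.mul hφ.deriv.differentiableAt.hasDerivAt).deriv.trans
    (by ring)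

end CumulantDerivatives

theorem iteratedDeriv_complexMGF_zero {Ω : Type*} [MeasurableSpace Ω] {X : Ω → ℝ}
    {μ : Measure Ω} (h : 0 ∈ interior (integrableExpSet X μ)) (n : ℕ) :
    iteratedDeriv n (complexMGF X μ) 0 = ((μ[X ^ n] : ℝ) : ℂ) := by
  rw [iteratedDeriv_complexMGF (by simpa using h)]
  simp only [zero_mul, Complex.exp_zero, mul_one, Pi.pow_apply, ← Complex.ofReal_pow]
  exact integral_ofReal

namespace IsCGF

variable {φ : ℂ → ℂ} {τ : ℝ} {μ : Measure ℝ}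

theorem analyticOnNhd (hφ : IsCGF φ τ μ) : AnalyticOnNhd ℂ φ {z | ‖z‖ * τ < 1} :=
  fun z hz => (hφ.2 z hz).2.2.1

theorem zero_mem_interior_integrableExpSet (hφ : IsCGF φ τ μ) :
    0 ∈ interior (integrableExpSet id μ) := by
  refine mem_interior.2 ⟨{t : ℝ | |t| * τ < 1}, fun t (ht : |t| * τ < 1) => ?_,
    isOpen_lt (continuous_abs.mul continuous_const) continuous_const, by simp⟩
  have hint := (hφ.2 t (by simpa using ht)).1.norm
  simpa [integrableExpSet, ← Complex.ofReal_mul, Complex.norm_exp_ofReal] using hint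

theorem cexp_eventuallyEq_complexMGF (hφ : IsCGF φ τ μ) :
    (fun z => Complex.exp (φ z)) =ᶠ[𝓝 0] complexMGF id μ := by
  have hopen : IsOpen {z : ℂ | ‖z‖ * τ < 1} :=
    isOpen_lt (continuous_norm.mul continuous_const) continuous_const
  filter_upwards [hopen.mem_nhds (by simp)] with z hz using (hφ.2 z hz).2.1

theorem deriv_zero (hφ : IsCGF φ τ μ) : deriv φ 0 = ((∫ x, x ∂μ : ℝ) : ℂ) := by
  have h := deriv_eq_of_cexp_eventuallyEq (hφ.analyticOnNhd 0 (by simp)).differentiableAt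
    hφ.cexp_eventuallyEq_complexMGF
  rw [hφ.1, Complex.exp_zero, one_mul, ← iteratedDeriv_one,
    iteratedDeriv_complexMGF_zero hφ.zero_mem_interior_integrableExpSet] at h
  simpa using h.symm

theorem iteratedDeriv_two_zero (hφ : IsCGF φ τ μ) :
    iteratedDeriv 2 φ 0 = ((∫ x, x ^ 2 ∂μ : ℝ) : ℂ) - ((∫ x, x ∂μ : ℝ) : ℂ) ^ 2 := by
  have h := deriv_deriv_eq_of_cexp_eventuallyEq (hφ.analyticOnNhd 0 (by simp))
    hφ.cexp_eventuallyEq_complexMGF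
  have h2 := iteratedDeriv_complexMGF_zero hφ.zero_mem_interior_integrableExpSet 2
  simp only [iteratedDeriv_succ, iteratedDeriv_zero] at h2 ⊢
  rw [hφ.1, Complex.exp_zero, one_mul, hφ.deriv_zero, h2] at h
  simp only [Pi.pow_apply, id_eq] at h
  rw [h]
  ring

end IsCGF

theorem Complex.exists_norm_le_one_eq_neg_mul_one_add {a : ℂ} {b c : ℝ}
    (h : ‖a + b‖ ≤ b * c) : ∃ θ : ℂ, ‖θ‖ ≤ 1 ∧ a = -(b : ℂ) * (1 + θ * c) := by
  rcases eq_or_ne (b * c) 0 with hbc | hbc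
  · refine ⟨0, by simp, ?_⟩
    rw [hbc, norm_le_zero_iff] at h
    linear_combination h
  · refine ⟨-(a + b) / (b * c : ℝ), ?_, ?_⟩
    · rw [norm_div, norm_neg, Complex.norm_real, Real.norm_eq_abs]
      exact div_le_one_of_le₀ (h.trans (le_abs_self _)) (abs_nonneg _)
    · obtain ⟨hb, hc⟩ := mul_ne_zero_iff.1 hbc
      have hb' : (b : ℂ) ≠ 0 := by exact_mod_cast hb
      have hc' : (c : ℂ) ≠ 0 := by exact_mod_cast hc
      push_cast
      field_simp
      ring

theorem log_charfun_expansion_A1_general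
    (τ σ : ℝ) (F : Measure ℝ)
    (hmean : (∫ x : ℝ, x ∂F) = 0) (hvar : variance id F = σ ^ 2)
    (φ : ℂ → ℂ) (hφ : IsCGF φ τ F)
    (h : ℝ) (hh : |h| * τ < 1) :
    ∃ θ : ℂ, ‖θ‖ ≤ 1 ∧
      φ (Complex.I * (h : ℂ)) =
        -(((σ ^ 2 * h ^ 2 / 2 : ℝ)) : ℂ) * (1 + θ * (((|h| * τ / 3 : ℝ)) : ℂ)) := by
  have hsecond : ∫ x, x ^ 2 ∂F = σ ^ 2 := by
    rw [← hvar, variance_of_integral_eq_zero aemeasurable_id hmean]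
    rfl
  have hmem : Complex.I * h ∈ {z : ℂ | ‖z‖ * τ < 1} := by simpa using hh
  have htaylor := norm_sub_taylor_two_le (starConvex_setOf_norm_mul_lt_one τ) hφ.analyticOnNhd
    (fun z hz => (hφ.2 z hz).2.2.2) hmem
  rw [hφ.1, hφ.deriv_zero, hφ.iteratedDeriv_two_zero, hmean, hsecond, hvar] at htaylor
  refine Complex.exists_norm_le_one_eq_neg_mul_one_add ?_
  calc ‖φ (Complex.I * h) + ((σ ^ 2 * h ^ 2 / 2 : ℝ) : ℂ)‖
      = ‖φ (Complex.I * h) - 0 - (Complex.I * h) • ((0 : ℝ) : ℂ) -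
          ((Complex.I * h) ^ 2 / 2) • (((σ ^ 2 : ℝ) : ℂ) - ((0 : ℝ) : ℂ) ^ 2)‖ := by
        congr 1
        simp only [smul_eq_mul, mul_pow, Complex.I_sq]
        push_cast
        ring
    _ ≤ τ * σ ^ 2 / 6 * ‖Complex.I * h‖ ^ 3 := htaylor
    _ = σ ^ 2 * h ^ 2 / 2 * (|h| * τ / 3) := by
        rw [norm_mul, Complex.norm_I, Complex.norm_real, Real.norm_eq_abs, ← sq_abs h]
        ring

/-- Expansion of the analytic logarithm `φ` of the Laplace transform at purely imaginary
points: for `|h| τ < 1`, `φ(ih) = -(σ²h²/2)(1 + θ|h|τ/3)` with `θ ∈ ℂ`, `‖θ‖ ≤ 1`. -/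
theorem log_charfun_expansion_A1
    (τ σ : ℝ) (hτ : 0 ≤ τ) (F : Measure ℝ) [IsProbabilityMeasure F]
    (hmean : (∫ x : ℝ, x ∂F) = 0) (hvar : variance id F = σ ^ 2)
    (φ : ℂ → ℂ) (hφ : IsCGF φ τ F)
    (h : ℝ) (hh : |h| * τ < 1) :
    ∃ θ : ℂ, ‖θ‖ ≤ 1 ∧
      φ (Complex.I * (h : ℂ)) =
        -(((σ ^ 2 * h ^ 2 / 2 : ℝ)) : ℂ) * (1 + θ * (((|h| * τ / 3 : ℝ)) : ℂ)) :=
  log_charfun_expansion_A1_general τ σ F hmean hvar φ hφ h hh
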